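/- Let G be an ordered mean with parameterized means G^μ. For positive definite operators A₁,…,Aₙ, a probability vector ω, any μ, ν ≥ 0, and t ∈ [0,1]: (1−t)·G^μ(ω; A) + t·G^ν(ω; A) ≤ G^{(1−t)μ + tν}(ω; A). -/

import Mathlib

open ContinuousLinearMap in
/-- A positive definite (positive invertible) bounded operator on a Hilbert space. -/
def IsPosDef {H : Type*} [NormedAddCommGroup H] [InnerProductSpace ℂ H] [CompleteSpace H]
    (A : H →L[ℂ] H) : Prop := A.IsPositive ∧ IsUnit A

/-- A positive probability vector. -/
def IsProbVec {n : ℕ} (w : Fin n → ℝ) : Prop := (∀ i, 0 < w i) ∧ ∑ i, w i = 1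

/-- An ordered mean: a family of weighted means of positive definite operators satisfying
homogeneity, monotonicity, joint concavity and the arithmetic-`G`-harmonic mean inequalities
with respect to the Loewner order. -/
structure OrderedMean (H : Type*) [NormedAddCommGroup H] [InnerProductSpace ℂ H]
    [CompleteSpace H] where
  G : ∀ n : ℕ, (Fin n → ℝ) → (Fin n → (H →L[ℂ] H)) → (H →L[ℂ] H)
  posDef : ∀ n w A, IsProbVec w → (∀ i, IsPosDef (A i)) → IsPosDef (G n w A)
  homog : ∀ n w A (a : ℝ), IsProbVec w → (∀ i, IsPosDef (A i)) → 0 < a →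
    G n w (fun i => a • A i) = a • G n w A
  mono : ∀ n w A B, IsProbVec w → (∀ i, IsPosDef (A i)) → (∀ i, IsPosDef (B i)) →
    (∀ i, B i ≤ A i) → G n w B ≤ G n w A
  concave : ∀ n w A B (s : ℝ), IsProbVec w → (∀ i, IsPosDef (A i)) → (∀ i, IsPosDef (B i)) →
    0 ≤ s → s ≤ 1 →
    (1 - s) • G n w A + s • G n w B ≤ G n w (fun i => (1 - s) • A i + s • B i)
  harm_le : ∀ n w A, IsProbVec w → (∀ i, IsPosDef (A i)) →
    Ring.inverse (∑ i, w i • Ring.inverse (A i)) ≤ G n w A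
  le_arith : ∀ n w A, IsProbVec w → (∀ i, IsPosDef (A i)) →
    G n w A ≤ ∑ i, w i • A i

/-- The parameterized ordered mean `G^μ`. -/
noncomputable def OrderedMean.pMean {H : Type*} [NormedAddCommGroup H] [InnerProductSpace ℂ H]
    [CompleteSpace H] (G : OrderedMean H) (μ : ℝ) (n : ℕ) (w : Fin n → ℝ)
    (A : Fin n → (H →L[ℂ] H)) : H →L[ℂ] H :=
  if 0 ≤ μ then G.G n w (fun i => A i + μ • 1) - μ • 1
  else Ring.inverse (G.G n w (fun i => Ring.inverse (A i) + (-μ) • 1) - (-μ) • 1)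

/-- The constant `ρ_{M,m}(t)`. -/
noncomputable def rhoConst (M m t : ℝ) : ℝ :=
  if M / m ≤ t then (1 - t) * m
  else if t ≤ m / M then (1 - t) * M
  else M + m - 2 * Real.sqrt (t * M * m)

/-! Both `A + μI` and the correction `μI` depend affinely on `μ`, so the joint concavity of `G`
passes to concavity of `μ ↦ G^μ(ω; A)`. -/

variable {H : Type*} [NormedAddCommGroup H] [InnerProductSpace ℂ H] [CompleteSpace H]

theorem isPosDef_iff_isStrictlyPositive {A : H →L[ℂ] H} : IsPosDef A ↔ IsStrictlyPositive A := by
  rw [IsPosDef, IsStrictlyPositive.iff_of_unital, ContinuousLinearMap.nonneg_iff_isPositive]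

theorem IsPosDef.add_smul_one {A : H →L[ℂ] H} (hA : IsPosDef A) {μ : ℝ} (hμ : 0 ≤ μ) :
    IsPosDef (A + μ • 1) :=
  isPosDef_iff_isStrictlyPositive.2 <|
    (isPosDef_iff_isStrictlyPositive.1 hA).add_nonneg (smul_nonneg hμ zero_le_one)

namespace OrderedMean

theorem pMean_of_nonneg (G : OrderedMean H) {μ : ℝ} (hμ : 0 ≤ μ) (n : ℕ) (w : Fin n → ℝ)
    (A : Fin n → (H →L[ℂ] H)) : G.pMean μ n w A = G.G n w (fun i => A i + μ • 1) - μ • 1 :=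
  if_pos hμ

theorem concave_add_smul_one (G : OrderedMean H) {n : ℕ} {w : Fin n → ℝ} (hw : IsProbVec w)
    {A : Fin n → (H →L[ℂ] H)} (hA : ∀ i, IsPosDef (A i)) {μ ν t : ℝ} (hμ : 0 ≤ μ) (hν : 0 ≤ ν)
    (ht0 : 0 ≤ t) (ht1 : t ≤ 1) :
    (1 - t) • G.G n w (fun i => A i + μ • 1) + t • G.G n w (fun i => A i + ν • 1) ≤
      G.G n w (fun i => A i + ((1 - t) * μ + t * ν) • 1) := by
  have hcomb : (fun i => (1 - t) • (A i + μ • 1) + t • (A i + ν • 1)) =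
      fun i => A i + ((1 - t) * μ + t * ν) • (1 : H →L[ℂ] H) := by
    funext i; module
  rw [← hcomb]
  exact G.concave n w _ _ t hw (fun i => (hA i).add_smul_one hμ)
    (fun i => (hA i).add_smul_one hν) ht0 ht1

end OrderedMean

theorem pMean_param_concave (G : OrderedMean H) {n : ℕ} (w : Fin n → ℝ) (hw : IsProbVec w)
    (A : Fin n → (H →L[ℂ] H)) (hA : ∀ i, IsPosDef (A i))
    (μ ν t : ℝ) (hμ : 0 ≤ μ) (hν : 0 ≤ ν) (ht0 : 0 ≤ t) (ht1 : t ≤ 1) :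
    (1 - t) • G.pMean μ n w A + t • G.pMean ν n w A ≤
      G.pMean ((1 - t) * μ + t * ν) n w A := by
  have hc : 0 ≤ (1 - t) * μ + t * ν :=
    add_nonneg (mul_nonneg (sub_nonneg.2 ht1) hμ) (mul_nonneg ht0 hν)
  rw [G.pMean_of_nonneg hμ, G.pMean_of_nonneg hν, G.pMean_of_nonneg hc]
  calc (1 - t) • (G.G n w (fun i => A i + μ • 1) - μ • 1)
        + t • (G.G n w (fun i => A i + ν • 1) - ν • 1)
      = ((1 - t) • G.G n w (fun i => A i + μ • 1) + t • G.G n w (fun i => A i + ν • 1))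
          - ((1 - t) * μ + t * ν) • (1 : H →L[ℂ] H) := by module
    _ ≤ _ := sub_le_sub_right (G.concave_add_smul_one hw hA hμ hν ht0 ht1) _
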